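/- Suppose a = δ_{g₀} ⋆ ã for some g₀ ∈ G and ã : G → 𝔽₂ (A = T_{g₀} · Ã). Let H̃_X, H̃_Z be the TT code matrices built from (ã, b, c) and H_X, H_Z those built from (a, b, c). Then the set of Hamming weights of vectors in ker(H_X) \ rs(H_Z) equals the set of Hamming weights of vectors in ker(H̃_X) \ rs(H̃_Z). Consequently the Z-distance d_Z (and hence the meta-check distance d_M) is unchanged when the common monomial factor is removed from A. -/

import Mathlib

/-!
Convolving with `δ_{g₀}` only translates `ã` by `g₀`. Translating the coordinates of the first
block by `g₀` turns `H_X(ã, b, c)` into `H_X(a, b, c)`, and together with a translation of the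
last two row blocks it turns `H_Z(ã, b, c)` into `H_Z(a, b, c)`. A coordinate permutation
preserves Hamming weights and carries kernel and row space of one code onto those of the other.
-/

open Matrix

/-- Convolution of functions `G → 𝔽₂`: `(P ⋆ Q)(x) = ∑_y P(y)·Q(x − y)`. -/
def conv {G : Type*} [AddCommGroup G] [Fintype G] (P Q : G → ZMod 2) : G → ZMod 2 :=
  fun x => ∑ y, P y * Q (x - y)

/-- The indicator function `δ_{g₀}` of `g₀ ∈ G`. -/
def delta {G : Type*} [DecidableEq G] (g₀ : G) : G → ZMod 2 :=
  fun x => if x = g₀ then 1 else 0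

/-- `H_X = [circ(p) circ(q) circ(r)]`. -/
def TT_HX {G : Type*} [AddCommGroup G] (p q r : G → ZMod 2) :
    Matrix G (Fin 3 × G) (ZMod 2) :=
  Matrix.of fun g i =>
    ![Matrix.circulant p, Matrix.circulant q, Matrix.circulant r] i.1 g i.2

/-- `H_Z = [[0, circ(r)ᵀ, circ(q)ᵀ], [circ(r)ᵀ, 0, circ(p)ᵀ], [circ(q)ᵀ, circ(p)ᵀ, 0]]`. -/
def TT_HZ {G : Type*} [AddCommGroup G] (p q r : G → ZMod 2) :
    Matrix (Fin 3 × G) (Fin 3 × G) (ZMod 2) :=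
  Matrix.of fun i j =>
    ![![0, (Matrix.circulant r)ᵀ, (Matrix.circulant q)ᵀ],
      ![(Matrix.circulant r)ᵀ, 0, (Matrix.circulant p)ᵀ],
      ![(Matrix.circulant q)ᵀ, (Matrix.circulant p)ᵀ, 0]] i.1 j.1 i.2 j.2

/-- Row space `rs(M)`: the span of the rows of `M`. -/
def rowSpace {m n : Type*} (M : Matrix m n (ZMod 2)) : Submodule (ZMod 2) (n → ZMod 2) :=
  Submodule.span (ZMod 2) (Set.range fun i => M i)

theorem conv_delta_left {G : Type*} [AddCommGroup G] [Fintype G] [DecidableEq G] (g₀ : G)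
    (P : G → ZMod 2) : conv (delta g₀) P = fun x => P (x - g₀) := by
  funext x
  simp [conv, delta]

theorem hammingNorm_comp_equiv {ι ι' β : Type*} [Fintype ι] [Fintype ι'] [Zero β]
    [DecidableEq β] (e : ι ≃ ι') (v : ι' → β) : hammingNorm (v ∘ e) = hammingNorm v :=
  Finset.card_equiv e (by simp)

theorem image_hammingNorm_eq_of_comp_equiv {ι ι' β : Type*} [Fintype ι] [Fintype ι'] [Zero β]
    [DecidableEq β] (e : ι ≃ ι') {S : Set (ι' → β)} {S' : Set (ι → β)}
    (h : ∀ v, v ∈ S ↔ v ∘ e ∈ S') : hammingNorm '' S = hammingNorm '' S' := by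
  ext w
  constructor
  · rintro ⟨v, hv, rfl⟩
    exact ⟨v ∘ e, (h v).1 hv, hammingNorm_comp_equiv e v⟩
  · rintro ⟨u, hu, rfl⟩
    have hu' : u ∘ e.symm ∘ e ∈ S' := by simpa [Function.comp_assoc] using hu
    exact ⟨u ∘ e.symm, (h _).2 hu', hammingNorm_comp_equiv e.symm u⟩

theorem mem_rowSpace_submatrix_iff {m m' n n' : Type*} (M : Matrix m n (ZMod 2)) (σ : m' ≃ m)
    (e : n' ≃ n) (v : n' → ZMod 2) :
    v ∈ rowSpace (M.submatrix σ e) ↔ v ∘ e.symm ∈ rowSpace M := by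
  have hmap : rowSpace (M.submatrix σ e) =
      (rowSpace M).map (LinearEquiv.funCongrLeft (ZMod 2) (ZMod 2) e).toLinearMap := by
    rw [rowSpace, rowSpace, Submodule.map_span, ← Set.range_comp]
    exact congrArg _ (σ.surjective.range_comp fun i => M i ∘ e)
  rw [hmap, Submodule.mem_map_equiv, LinearEquiv.funCongrLeft_symm]
  rfl

def blockShift {ι G : Type*} [AddGroup G] (s : ι → G) : ι × G ≃ ι × G :=
  Equiv.prodShear (Equiv.refl ι) fun i => Equiv.addRight (s i)

@[simp]
theorem blockShift_apply {ι G : Type*} [AddGroup G] (s : ι → G) (x : ι × G) :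
    blockShift s x = (x.1, x.2 + s x.1) :=
  rfl

section Translate

variable {G : Type*} [AddCommGroup G] (a b c : G → ZMod 2) (g₀ : G)

theorem TT_HX_translate :
    TT_HX (fun x => a (x - g₀)) b c = (TT_HX a b c).submatrix id (blockShift ![g₀, 0, 0]) := by
  ext g ⟨j, h⟩
  revert j
  simp [Fin.forall_fin_succ, TT_HX, sub_add_eq_sub_sub]

theorem TT_HZ_translate :
    TT_HZ (fun x => a (x - g₀)) b c =
      (TT_HZ a b c).submatrix (blockShift ![0, g₀, g₀]) (blockShift ![g₀, 0, 0]) := by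
  ext ⟨i, g⟩ ⟨j, h⟩
  revert i j
  simp [Fin.forall_fin_succ, TT_HZ, sub_add_eq_sub_sub, add_sub_right_comm]

end Translate

/-- `d_Z` is the infimum of this set. -/
def zLogicalWeights {G : Type*} [AddCommGroup G] [Fintype G]
    (p q r : G → ZMod 2) : Set ℕ :=
  hammingNorm '' {v | TT_HX p q r *ᵥ v = 0 ∧ v ∉ rowSpace (TT_HZ p q r)}

theorem zLogicalWeights_translate {G : Type*} [AddCommGroup G] [Fintype G]
    (a b c : G → ZMod 2) (g₀ : G) :
    zLogicalWeights (fun x => a (x - g₀)) b c = zLogicalWeights a b c := by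
  refine image_hammingNorm_eq_of_comp_equiv (blockShift ![g₀, 0, 0]).symm fun v =>
    and_congr ?_ (not_congr ?_)
  · rw [TT_HX_translate, submatrix_mulVec_equiv, Function.comp_id]
  · rw [TT_HZ_translate, mem_rowSpace_submatrix_iff]

/-- If `a = δ_{g₀} ⋆ ã` then the set of Hamming weights of vectors in
`ker(H_X) \ rs(H_Z)` is the same for the TT codes built from `(a, b, c)` and
from `(ã, b, c)`; consequently the `Z`-distance `d_Z` (and hence the meta-check
distance `d_M`) is unchanged when the common monomial factor is removed. -/
theorem tt_dZ_invariant_of_monomial_factor {G : Type*} [AddCommGroup G]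
    [Fintype G] [DecidableEq G] (a a' b c : G → ZMod 2) (g₀ : G)
    (h : a = conv (delta g₀) a') :
    {w : ℕ | ∃ v : Fin 3 × G → ZMod 2,
        ((TT_HX a b c).mulVec v = 0 ∧ v ∉ rowSpace (TT_HZ a b c)) ∧
          hammingNorm v = w} =
      {w : ℕ | ∃ v : Fin 3 × G → ZMod 2,
        ((TT_HX a' b c).mulVec v = 0 ∧ v ∉ rowSpace (TT_HZ a' b c)) ∧
          hammingNorm v = w} ∧
    sInf {w : ℕ | ∃ v : Fin 3 × G → ZMod 2,
        ((TT_HX a b c).mulVec v = 0 ∧ v ∉ rowSpace (TT_HZ a b c)) ∧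
          hammingNorm v = w} =
      sInf {w : ℕ | ∃ v : Fin 3 × G → ZMod 2,
        ((TT_HX a' b c).mulVec v = 0 ∧ v ∉ rowSpace (TT_HZ a' b c)) ∧
          hammingNorm v = w} := by
  have hweights : zLogicalWeights a b c = zLogicalWeights a' b c := by
    rw [h, conv_delta_left, zLogicalWeights_translate]
  exact ⟨hweights, congrArg sInf hweights⟩
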